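/- arXiv:1810.08636 — 4 statements merged into one kernel-verified Lean document; each statement's English description precedes it below -/
import Mathlib

section
/- The addition of min-unbounded ultrafilters on FIN is associative: for all min-unbounded ultrafilters u, v, w on FIN, (u + v) + w = u + (v + w). -/
open Set

def FIN : Set (Finset ℕ) := {s | s.Nonempty}

/-- FU(X): all unions of nonempty finite subfamilies of X. -/
def FU (X : Set (Finset ℕ)) : Set (Finset ℕ) :=
  {s | ∃ F : Finset (Finset ℕ), F.Nonempty ∧ ↑F ⊆ X ∧ s = F.sup id}

/-- min of a (nonempty) finite set of naturals. -/
noncomputable def mn (s : Finset ℕ) : ℕ := sInf ↑s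
/-- max of a finite set of naturals. -/
def mx (s : Finset ℕ) : ℕ := s.sup id

def MinUnbSet (A : Set (Finset ℕ)) : Prop := ∀ n : ℕ, ∃ x ∈ A, n < mn x

/-- −x + A = { y ∈ FIN | max x < min y ∧ x ∪ y ∈ A }. -/
def negAdd (x : Finset ℕ) (A : Set (Finset ℕ)) : Set (Finset ℕ) :=
  {y | y ∈ FIN ∧ mx x < mn y ∧ x ∪ y ∈ A}

/-- A ∈ u + v iff { x | −x + A ∈ v } ∈ u. -/
def sumMem (u v : Ultrafilter (Finset ℕ)) (A : Set (Finset ℕ)) : Prop :=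
  {x | negAdd x A ∈ v} ∈ u

/-- a min-unbounded ultrafilter on FIN. -/
def MinUnbUlt (u : Ultrafilter (Finset ℕ)) : Prop :=
  FIN ∈ u ∧ ∀ A ∈ u, MinUnbSet A

/-- an infinite pairwise disjoint family of nonempty finite sets. -/
def PDisjFam (X : Set (Finset ℕ)) : Prop :=
  X ⊆ FIN ∧ X.Infinite ∧ X.PairwiseDisjoint id

/-- a block family: any two distinct members are separated. -/
def IsBlockFam (X : Set (Finset ℕ)) : Prop :=
  X ⊆ FIN ∧ ∀ x ∈ X, ∀ y ∈ X, x ≠ y → mx x < mn y ∨ mx y < mn x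

/-- a block sequence indexed by ℕ. -/
def IsBlockSeq (x : ℕ → Finset ℕ) : Prop :=
  (∀ n, (x n).Nonempty) ∧ ∀ n, mx (x n) < mn (x (n + 1))

/-- A* = { x ∈ A | −x + A ∈ u }. -/
def ustar (u : Ultrafilter (Finset ℕ)) (A : Set (Finset ℕ)) : Set (Finset ℕ) :=
  {x | x ∈ A ∧ negAdd x A ∈ u}

/-- a union ultrafilter on FIN. -/
def UnionUlt (u : Ultrafilter (Finset ℕ)) : Prop :=
  FIN ∈ u ∧ ∀ A ∈ u, ∃ X, PDisjFam X ∧ FU X ∈ u ∧ FU X ⊆ A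

/-- almost condensation: X ≤ Y iff X \ F ⊆ FU Y for some finite F. -/
lemma mn_mem {y : Finset ℕ} (hy : y.Nonempty) : mn y ∈ y := by
  have : sInf (↑y : Set ℕ) ∈ (↑y : Set ℕ) := Nat.sInf_mem (Finset.coe_nonempty.2 hy)
  exact_mod_cast this

lemma mn_le {y : Finset ℕ} {a : ℕ} (ha : a ∈ y) : mn y ≤ a :=
  Nat.sInf_le (by exact_mod_cast ha)

lemma mn_le_mx {y : Finset ℕ} (hy : y.Nonempty) : mn y ≤ mx y :=
  Finset.le_sup (f := id) (mn_mem hy)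

lemma tail_mem {v : Ultrafilter (Finset ℕ)} (hv : MinUnbUlt v) (n : ℕ) :
    {y : Finset ℕ | y ∈ FIN ∧ n < mn y} ∈ v := by
  have h1 : {y : Finset ℕ | n < mn y} ∈ v := by
    by_contra h
    have hc : {y : Finset ℕ | n < mn y}ᶜ ∈ v := Ultrafilter.compl_mem_iff_notMem.2 h
    obtain ⟨y, hy, hny⟩ := hv.2 _ hc n
    exact hy hny
  exact Filter.inter_mem hv.1 h1

lemma negAdd_assoc (x : Finset ℕ) (A : Set (Finset ℕ)) {y : Finset ℕ}
    (hy : y ∈ FIN) (hxy : mx x < mn y) :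
    negAdd (x ∪ y) A = negAdd y (negAdd x A) := by
  have hyne : y.Nonempty := hy
  have hmxy : mx (x ∪ y) = mx y := by
    have : mx x ≤ mx y := le_trans hxy.le (mn_le_mx hyne)
    rw [mx, Finset.sup_union]
    exact sup_eq_right.2 this
  ext z
  simp only [negAdd, Set.mem_setOf_eq]
  constructor
  · rintro ⟨hz, h1, h2⟩
    rw [hmxy] at h1
    have hzne : z.Nonempty := hz
    have hyz : (y ∪ z).Nonempty := hyne.mono (Finset.subset_union_left)
    have hmin : mx x < mn (y ∪ z) := by
      have hm := mn_mem hyz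
      rcases Finset.mem_union.1 hm with h | h
      · exact lt_of_lt_of_le hxy (mn_le h)
      · exact lt_of_lt_of_le (lt_trans hxy (lt_of_le_of_lt (mn_le_mx hyne) (lt_of_lt_of_le h1 (mn_le h)))) le_rfl
    exact ⟨hz, h1, hyz, hmin, by rwa [← Finset.union_assoc]⟩
  · rintro ⟨hz, h1, _, _, h3⟩
    rw [hmxy]
    exact ⟨hz, h1, by rwa [Finset.union_assoc]⟩

def ACond (X Y : Set (Finset ℕ)) : Prop :=
  ∃ F : Set (Finset ℕ), F.Finite ∧ X \ F ⊆ FU Y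

theorem stmt6 (u v w s t : Ultrafilter (Finset ℕ))
    (hu : MinUnbUlt u) (hv : MinUnbUlt v) (hw : MinUnbUlt w)
    (hs : ∀ A : Set (Finset ℕ), A ∈ s ↔ sumMem u v A)
    (ht : ∀ A : Set (Finset ℕ), A ∈ t ↔ sumMem v w A) :
    ∀ A : Set (Finset ℕ), sumMem s w A ↔ sumMem u t A := by
  intro A
  have key : ∀ x : Finset ℕ,
      negAdd x {z | negAdd z A ∈ w} ∈ v ↔ {y | negAdd y (negAdd x A) ∈ w} ∈ v := by
    intro x
    have hT := tail_mem hv (mx x)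
    constructor
    · intro h
      refine Filter.mem_of_superset h ?_
      rintro y ⟨hy, hxy, hB⟩
      show negAdd y (negAdd x A) ∈ w
      rw [← negAdd_assoc x A hy hxy]
      exact hB
    · intro h
      refine Filter.mem_of_superset (Filter.inter_mem hT h) ?_
      rintro y ⟨⟨hy, hxy⟩, hS⟩
      refine ⟨hy, hxy, ?_⟩
      show negAdd (x ∪ y) A ∈ w
      rw [negAdd_assoc x A hy hxy]
      exact hS
  have e1 : sumMem s w A ↔ sumMem u v {z | negAdd z A ∈ w} := hs _
  have e2 : {x : Finset ℕ | negAdd x A ∈ t} = {x | negAdd x {z | negAdd z A ∈ w} ∈ v} := by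
    ext x
    rw [Set.mem_setOf_eq, Set.mem_setOf_eq, ht, key]
    rfl
  unfold sumMem at *
  rw [e1, e2]
end

section
/- Let F be a min-unbounded filter on FIN with a subbasis consisting of sets of the form FU(X) for X an infinite pairwise disjoint family. Then F can be extended to an idempotent min-unbounded ultrafilter u on FIN (i.e., u + u = u and F ⊆ u). -/
open Set

-- auxiliary material
instance finsetUnionMul : Mul (Finset ℕ) := ⟨(· ∪ ·)⟩
instance finsetUnionSemigroup : Semigroup (Finset ℕ) :=
  ⟨fun a b c => Finset.union_assoc a b c⟩

attribute [local instance] Ultrafilter.mul Ultrafilter.semigroup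

lemma memMul (U V : Ultrafilter (Finset ℕ)) (A : Set (Finset ℕ)) :
    A ∈ U * V ↔ {x | {y | x ∪ y ∈ A} ∈ V} ∈ U := Iff.rfl

lemma nonempty_of_lt_mn {n : ℕ} {y : Finset ℕ} (h : n < mn y) : y.Nonempty := by
  rcases y.eq_empty_or_nonempty with rfl | hy
  · simp [mn, Nat.sInf_empty] at h
  · exact hy

lemma lt_mn_union {n : ℕ} {x y : Finset ℕ} (hx : n < mn x) (hy : n < mn y) :
    n < mn (x ∪ y) := by
  have hxne := nonempty_of_lt_mn hx
  have hne : ((x ∪ y : Finset ℕ) : Set ℕ).Nonempty := by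
    exact_mod_cast hxne.mono (x.subset_union_left (s₂ := y))
  have hmem : mn (x ∪ y) ∈ ((x ∪ y : Finset ℕ) : Set ℕ) := Nat.sInf_mem hne
  rcases Finset.mem_union.mp (by exact_mod_cast hmem) with h | h
  · exact lt_of_lt_of_le hx (Nat.sInf_le (by exact_mod_cast h))
  · exact lt_of_lt_of_le hy (Nat.sInf_le (by exact_mod_cast h))

lemma FU_union_mem {X : Set (Finset ℕ)} {x y : Finset ℕ}
    (hx : x ∈ FU X) (hy : y ∈ FU X) : x ∪ y ∈ FU X := by
  obtain ⟨Fx, hFxne, hFxX, rfl⟩ := hx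
  obtain ⟨Fy, hFyne, hFyX, rfl⟩ := hy
  refine ⟨Fx ∪ Fy, hFxne.mono Finset.subset_union_left, ?_, ?_⟩
  · intro s hs
    rcases Finset.mem_union.mp (by exact_mod_cast hs) with h | h
    · exact hFxX h
    · exact hFyX h
  · rw [Finset.sup_union]; rfl

theorem stmt8 (F : Filter (Finset ℕ)) [F.NeBot]
    (hmin : ∀ A ∈ F, MinUnbSet A)
    (S : Set (Set (Finset ℕ)))
    (hS : ∀ s ∈ S, ∃ X, PDisjFam X ∧ s = FU X)
    (hbase : ∀ A : Set (Finset ℕ), A ∈ F ↔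
      ∃ T : Finset (Set (Finset ℕ)), ↑T ⊆ S ∧ ⋂₀ (↑T : Set (Set (Finset ℕ))) ⊆ A) :
    ∃ u : Ultrafilter (Finset ℕ), (∀ A ∈ F, A ∈ u) ∧ MinUnbUlt u ∧
      ∀ A : Set (Finset ℕ), A ∈ u ↔ sumMem u u A := by
  classical
  set T : ℕ → Set (Finset ℕ) := fun n => {x | n < mn x} with hTdef
  -- every element of S is in F
  have hSF : ∀ s ∈ S, s ∈ F := by
    intro s hs
    exact (hbase s).mpr ⟨{s}, by simpa using hs, by simp⟩
  -- the candidate set of ultrafilters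
  set C : Set (Ultrafilter (Finset ℕ)) :=
    {u | (∀ A ∈ F, A ∈ u) ∧ ∀ n, T n ∈ u} with hCdef
  -- C is nonempty
  have hCne : C.Nonempty := by
    have hGne : (F ⊓ Filter.comap mn Filter.atTop).NeBot := by
      rw [Filter.inf_neBot_iff]
      intro A hA B hB
      obtain ⟨t, ht, hsub⟩ := Filter.mem_comap.mp hB
      obtain ⟨n, hn⟩ := Filter.mem_atTop_sets.mp ht
      obtain ⟨x, hxA, hxn⟩ := hmin A hA n
      exact ⟨x, hxA, hsub (hn _ hxn.le)⟩
    refine ⟨Ultrafilter.of (F ⊓ Filter.comap mn Filter.atTop), ?_, ?_⟩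
    · intro A hA
      exact (Ultrafilter.of_le _)
        ((inf_le_left : F ⊓ Filter.comap mn Filter.atTop ≤ F) hA)
    · intro n
      exact (Ultrafilter.of_le _)
        ((inf_le_right : F ⊓ Filter.comap mn Filter.atTop ≤ _)
          (Filter.preimage_mem_comap (Filter.Ioi_mem_atTop n)))
  -- C is compact
  have hCclosed : IsClosed C := by
    have : C = (⋂ A ∈ F, {u : Ultrafilter (Finset ℕ) | A ∈ u}) ∩
        ⋂ n, {u : Ultrafilter (Finset ℕ) | T n ∈ u} := by
      ext u; simp [hCdef]
    rw [this]
    exact IsClosed.inter (isClosed_biInter fun A _ => ultrafilter_isClosed_basic A)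
      (isClosed_iInter fun n => ultrafilter_isClosed_basic (T n))
  have hCcomp : IsCompact C := hCclosed.isCompact
  -- C is a subsemigroup
  have hCmul : ∀ u ∈ C, ∀ v ∈ C, u * v ∈ C := by
    intro u hu v hv
    constructor
    · intro A hA
      obtain ⟨T', hT'S, hsub⟩ := (hbase A).mp hA
      have hsInter : ⋂₀ (↑T' : Set (Set (Finset ℕ))) ∈ (u * v : Ultrafilter _) := by
        rw [← Ultrafilter.mem_coe, Filter.sInter_mem T'.finite_toSet]
        intro s hs
        have hsS := hT'S hs
        obtain ⟨X, _, rfl⟩ := hS s hsS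
        have hsu : FU X ∈ u := hu.1 _ (hSF _ hsS)
        have hsv : FU X ∈ v := hv.1 _ (hSF _ hsS)
        rw [Ultrafilter.mem_coe, memMul]
        exact Filter.mem_of_superset hsu fun x hx =>
          Filter.mem_of_superset hsv fun y hy => FU_union_mem hx hy
      exact Filter.mem_of_superset hsInter hsub
    · intro n
      rw [memMul]
      refine Filter.mem_of_superset (hu.2 n) fun x hx => ?_
      exact Filter.mem_of_superset (hv.2 n) fun y hy => lt_mn_union hx hy
  -- extract an idempotent
  obtain ⟨u, huC, huid⟩ := exists_idempotent_in_compact_subsemigroup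
    Ultrafilter.continuous_mul_left C hCne hCcomp hCmul
  -- T n ⊆ FIN
  have hTFIN : ∀ n, T n ⊆ FIN := fun n x hx => nonempty_of_lt_mn hx
  have hFINu : FIN ∈ u := Filter.mem_of_superset (huC.2 0) (hTFIN 0)
  refine ⟨u, huC.1, ⟨hFINu, ?_⟩, ?_⟩
  · intro A hA n
    have : A ∩ T n ∈ u := Filter.inter_mem hA (huC.2 n)
    obtain ⟨x, hxA, hxT⟩ := Ultrafilter.nonempty_of_mem this
    exact ⟨x, hxA, hxT⟩
  · intro A
    have hkey : ∀ x : Finset ℕ, negAdd x A ∈ u ↔ {y | x ∪ y ∈ A} ∈ u := by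
      intro x
      constructor
      · exact fun h => Filter.mem_of_superset h fun y hy => hy.2.2
      · intro h
        refine Filter.mem_of_superset
          (Filter.inter_mem (Filter.inter_mem hFINu (huC.2 (mx x))) h) ?_
        rintro y ⟨⟨h1, h2⟩, h3⟩
        exact ⟨h1, h2, h3⟩
    have hset : {x | negAdd x A ∈ u} = {x | {y | x ∪ y ∈ A} ∈ u} :=
      Set.ext fun x => hkey x
    unfold sumMem
    rw [hset]
    rw [← memMul u u A, huid]
end

section
/- Let u be an idempotent min-unbounded ultrafilter on FIN and let A ∈ u. Then there exists an infinite block sequence ⟨xₙ | n < ω⟩ (with max(xₙ) < min(x_{n+1}) for all n) such that FU({xₙ | n < ω}) ⊆ A. -/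
open Set

/-! Since `u` is idempotent, `A ∈ u` gives `A* ∈ u`, and `−x + A ∈ u` gives `−x + A* ∈ u`.
Hence for any finite `S ⊆ A*` the set `A* ∩ ⋂_{y ∈ S} (−y + A*)` lies in `u` and is nonempty.
Choosing `xₙ` in it with `S` the set of finite unions of `x₀, …, xₙ₋₁` keeps all finite unions
inside `A*`, and membership of `xₙ₊₁` in `−xₙ + A*` makes the sequence a block sequence. -/

lemma mn_mem_s9 {s : Finset ℕ} (hs : s.Nonempty) : mn s ∈ s := by
  simpa [mn] using Nat.sInf_mem (s := (↑s : Set ℕ)) (by simpa using hs)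

lemma le_mx {s : Finset ℕ} {a : ℕ} (ha : a ∈ s) : a ≤ mx s :=
  Finset.le_sup (f := id) ha

lemma mn_le_mx_s9 {s : Finset ℕ} (hs : s.Nonempty) : mn s ≤ mx s :=
  le_mx (mn_mem_s9 hs)

lemma mx_union (s t : Finset ℕ) : mx (s ∪ t) = max (mx s) (mx t) :=
  Finset.sup_union

lemma negAdd_negAdd_subset {x z : Finset ℕ} (hz : z.Nonempty) (hxz : mx x < mn z)
    (A : Set (Finset ℕ)) : negAdd z (negAdd x A) ⊆ negAdd (x ∪ z) A := by
  rintro w ⟨hw, hzw, -, -, hxzw⟩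
  have hmx : mx (x ∪ z) < mn w := by
    rw [mx_union, max_lt_iff]
    exact ⟨hxz.trans_le ((mn_le_mx_s9 hz).trans_lt hzw).le, hzw⟩
  exact ⟨hw, hmx, by rwa [Finset.union_assoc]⟩

lemma FU_range_subset {x : ℕ → Finset ℕ} {B : Set (Finset ℕ)}
    (h : ∀ I : Finset ℕ, I.Nonempty → I.sup x ∈ B) : FU (range x) ⊆ B := by
  rintro s ⟨F, hF, hFx, rfl⟩
  rw [← image_univ] at hFx
  obtain ⟨I, -, rfl⟩ := Finset.subset_set_image_iff.1 hFx
  rw [Finset.sup_image]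
  exact h I (Finset.image_nonempty.1 hF)

section Idempotent

variable {u : Ultrafilter (Finset ℕ)} (hidem : ∀ A : Set (Finset ℕ), A ∈ u ↔ sumMem u u A)
include hidem

lemma ustar_mem {A : Set (Finset ℕ)} (hA : A ∈ u) : ustar u A ∈ u :=
  Filter.inter_mem hA ((hidem A).1 hA)

lemma negAdd_ustar_mem {A : Set (Finset ℕ)} {x : Finset ℕ} (hx : negAdd x A ∈ u) :
    negAdd x (ustar u A) ∈ u := by
  refine Filter.mem_of_superset (ustar_mem hidem hx) ?_
  rintro z ⟨⟨hzF, hxz, hxzA⟩, hzu⟩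
  exact ⟨hzF, hxz, hxzA, Filter.mem_of_superset hzu (negAdd_negAdd_subset hzF hxz A)⟩

lemma inter_biInter_negAdd_ustar_mem (hFIN : FIN ∈ u) {A : Set (Finset ℕ)} (hA : A ∈ u)
    (S : Finset (Finset ℕ)) (hS : ↑S ⊆ ustar u A) :
    FIN ∩ ustar u A ∩ ⋂ y ∈ S, negAdd y (ustar u A) ∈ u := by
  refine Filter.inter_mem (Filter.inter_mem hFIN (ustar_mem hidem hA)) ?_
  exact (Filter.biInter_finset_mem S).2 fun y hy => negAdd_ustar_mem hidem (hS hy).2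

end Idempotent

namespace GalvinGlazer

variable (next : Finset (Finset ℕ) → Finset ℕ)

/-- `unions next n = FU({term next i | i < n})`. -/
def unions : ℕ → Finset (Finset ℕ)
  | 0 => ∅
  | n + 1 =>
    let S := unions n
    insert (next S) (S ∪ S.image (· ∪ next S))

def term (n : ℕ) : Finset ℕ := next (unions next n)

lemma term_mem_unions_succ (n : ℕ) : term next n ∈ unions next (n + 1) :=
  Finset.mem_insert_self _ _

lemma unions_subset_succ (n : ℕ) : unions next n ⊆ unions next (n + 1) :=
  Finset.subset_union_left.trans (Finset.subset_insert _ _)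

lemma union_term_mem_unions_succ {n : ℕ} {y : Finset ℕ} (hy : y ∈ unions next n) :
    y ∪ term next n ∈ unions next (n + 1) :=
  Finset.mem_insert_of_mem (Finset.mem_union_right _ (Finset.mem_image_of_mem _ hy))

lemma sup_term_mem_unions {n : ℕ} {I : Finset ℕ} (hI : I.Nonempty) (hIn : I ⊆ Finset.range n) :
    I.sup (term next) ∈ unions next n := by
  induction n generalizing I with
  | zero => simp_all
  | succ n ih =>
    rw [Finset.range_add_one] at hIn
    by_cases hn : n ∈ I
    · rw [← Finset.insert_erase hn, Finset.sup_insert]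
      rcases (I.erase n).eq_empty_or_nonempty with hE | hE
      · simpa [hE] using term_mem_unions_succ next n
      · rw [sup_comm]
        exact union_term_mem_unions_succ next (ih hE (Finset.subset_insert_iff.1 hIn))
    · exact unions_subset_succ next n (ih hI ((Finset.subset_insert_iff_of_notMem hn).1 hIn))

variable {next} {B : Set (Finset ℕ)}
  (hnext : ∀ S : Finset (Finset ℕ), ↑S ⊆ B → next S ∈ FIN ∩ B ∩ ⋂ y ∈ S, negAdd y B)
include hnext

lemma unions_subset (n : ℕ) : ↑(unions next n) ⊆ B := by
  induction n with
  | zero => simp [unions]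
  | succ n ih =>
    obtain ⟨⟨-, hzB⟩, hzS⟩ := hnext _ ih
    simp only [unions, Finset.coe_insert, Finset.coe_union, Finset.coe_image]
    refine insert_subset hzB (union_subset ih ?_)
    rintro _ ⟨y, hy, rfl⟩
    exact (mem_iInter₂.1 hzS y hy).2.2

lemma term_mem (n : ℕ) : term next n ∈ FIN ∩ B ∩ ⋂ y ∈ unions next n, negAdd y B :=
  hnext _ (unions_subset hnext n)

lemma isBlockSeq_term : IsBlockSeq (term next) := by
  refine ⟨fun n => (term_mem hnext n).1.1, fun n => ?_⟩
  exact (mem_iInter₂.1 (term_mem hnext (n + 1)).2 _ (term_mem_unions_succ next n)).2.1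

lemma FU_range_term_subset : FU (range (term next)) ⊆ B :=
  FU_range_subset fun _ hI =>
    unions_subset hnext _ (sup_term_mem_unions next hI fun _ hi =>
      Finset.mem_range.2 (Nat.lt_succ_of_le (le_mx hi)))

end GalvinGlazer

theorem exists_isBlockSeq_FU_range_subset {B : Set (Finset ℕ)}
    (hB : ∀ S : Finset (Finset ℕ), ↑S ⊆ B → (FIN ∩ B ∩ ⋂ y ∈ S, negAdd y B).Nonempty) :
    ∃ x : ℕ → Finset ℕ, IsBlockSeq x ∧ FU (range x) ⊆ B := by
  have hB' : ∀ S : Finset (Finset ℕ), ∃ z, ↑S ⊆ B → z ∈ FIN ∩ B ∩ ⋂ y ∈ S, negAdd y B := by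
    intro S
    by_cases hS : ↑S ⊆ B
    · exact (hB S hS).imp fun _ hz _ => hz
    · exact ⟨∅, fun h => absurd h hS⟩
  choose next hnext using hB'
  exact ⟨_, GalvinGlazer.isBlockSeq_term hnext, GalvinGlazer.FU_range_term_subset hnext⟩

theorem stmt9 (u : Ultrafilter (Finset ℕ)) (hu : MinUnbUlt u)
    (hidem : ∀ A : Set (Finset ℕ), A ∈ u ↔ sumMem u u A)
    (A : Set (Finset ℕ)) (hA : A ∈ u) :
    ∃ x : ℕ → Finset ℕ, (∀ n, (x n).Nonempty) ∧
      (∀ n, mx (x n) < mn (x (n + 1))) ∧ FU (Set.range x) ⊆ A := by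
  obtain ⟨x, ⟨hne, hblock⟩, hFU⟩ := exists_isBlockSeq_FU_range_subset fun S hS =>
    Ultrafilter.nonempty_of_mem (inter_biInter_negAdd_ustar_mem hidem hu.1 hA S hS)
  exact ⟨x, hne, hblock, hFU.trans fun _ hs => hs.1⟩
end

section
/- If u is a nonprincipal ultrafilter on FIN, then player II does not have a winning strategy in the game G(u), in which at inning n player I plays a set Aₙ ∈ u, player II responds with xₙ ∈ Aₙ, and player II wins iff FU({xₙ | n < ω}) ∈ u. -/
open Set

/-!
Run two plays against a strategy `σ` for player II in which player I only ever asks for sets whose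
maximum exceeds a threshold: in the first play the thresholds are the maxima of II's previous
answers in the second play, and vice versa. Legality of II's answers makes the maxima of the two
plays strictly interleave, hence pairwise distinct. Since the maximum of a finite union is the
maximum of one of its members, the two FU-sets are disjoint, so they cannot both lie in `u`.
-/

def maxAbove (k : ℕ) : Set (Finset ℕ) := {s | k < mx s}

lemma maxAbove_mem {u : Ultrafilter (Finset ℕ)}
    (hnp : ∀ A : Set (Finset ℕ), A.Finite → A ∉ u) (k : ℕ) : maxAbove k ∈ u := by
  by_contra h
  refine hnp _ ?_ (Ultrafilter.compl_mem_iff_notMem.2 h)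
  refine (Finset.range (k + 1)).powerset.finite_toSet.subset fun s hs => ?_
  simp only [Finset.coe_powerset, mem_preimage, mem_powerset_iff, Finset.coe_subset]
  intro a ha
  have : a ≤ mx s := Finset.le_sup (f := id) ha
  simp only [maxAbove, mem_compl_iff, mem_ofPred_eq, not_lt] at hs
  simpa only [Finset.mem_range] using Nat.lt_succ_of_le (this.trans hs)

lemma mx_sup_id (F : Finset (Finset ℕ)) : mx (F.sup id) = F.sup mx := by
  rw [mx, Finset.sup_eq_biUnion, Finset.sup_biUnion]
  rfl

lemma exists_mx_eq_of_mem_FU {X : Set (Finset ℕ)} {s : Finset ℕ} (hs : s ∈ FU X) :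
    ∃ x ∈ X, mx s = mx x := by
  obtain ⟨F, hne, hsub, rfl⟩ := hs
  obtain ⟨x, hx, hmx⟩ := Finset.exists_mem_eq_sup F hne mx
  exact ⟨x, hsub hx, by rw [mx_sup_id, hmx]⟩

lemma disjoint_FU_of_mx_ne {X Y : Set (Finset ℕ)} (h : ∀ x ∈ X, ∀ y ∈ Y, mx x ≠ mx y) :
    Disjoint (FU X) (FU Y) := by
  refine Set.disjoint_left.2 fun s hsX hsY => ?_
  obtain ⟨x, hx, hsx⟩ := exists_mx_eq_of_mem_FU hsX
  obtain ⟨y, hy, hsy⟩ := exists_mx_eq_of_mem_FU hsY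
  exact h x hx y hy (hsx.symm.trans hsy)

section Play

variable (σ : List (Set (Finset ℕ)) → Finset ℕ)

def response (A : ℕ → Set (Finset ℕ)) (n : ℕ) : Finset ℕ :=
  σ ((List.range (n + 1)).map A)

lemma response_mem {u : Ultrafilter (Finset ℕ)}
    (hlegal : ∀ (l : List (Set (Finset ℕ))) (A : Set (Finset ℕ)),
      (∀ B ∈ l, B ∈ u) → A ∈ u → σ (l ++ [A]) ∈ A)
    {A : ℕ → Set (Finset ℕ)} (hA : ∀ n, A n ∈ u) (n : ℕ) : response σ A n ∈ A n := by
  rw [response, List.range_succ, List.map_append, List.map_singleton]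
  refine hlegal _ _ (fun B hB => ?_) (hA n)
  obtain ⟨i, -, rfl⟩ := List.mem_map.1 hB
  exact hA i

/-- `thresholds σ (k + 1)` is the maximum of II's answer at inning `k / 2` of play `k % 2`, in
which player I plays `maxAbove (thresholds σ (2 * i + k % 2))` at inning `i`. -/
noncomputable def thresholds : ℕ → ℕ
  | 0 => 0
  | k + 1 => mx (σ ((List.range (k / 2 + 1)).attach.map fun ⟨i, _⟩ =>
      maxAbove (thresholds (2 * i + k % 2))))
decreasing_by simp_all only [List.mem_range]; omega

lemma thresholds_succ {p : ℕ} (hp : p < 2) (n : ℕ) :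
    thresholds σ (2 * n + p + 1) =
      mx (response σ (fun i => maxAbove (thresholds σ (2 * i + p))) n) := by
  rw [thresholds, List.map_attach_eq_pmap, List.pmap_eq_map, response,
    show (2 * n + p) / 2 = n by omega, show (2 * n + p) % 2 = p by omega]

lemma thresholds_strictMono {u : Ultrafilter (Finset ℕ)}
    (hnp : ∀ A : Set (Finset ℕ), A.Finite → A ∉ u)
    (hlegal : ∀ (l : List (Set (Finset ℕ))) (A : Set (Finset ℕ)),
      (∀ B ∈ l, B ∈ u) → A ∈ u → σ (l ++ [A]) ∈ A) :
    StrictMono (thresholds σ) := by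
  refine strictMono_nat_of_lt_succ fun k => ?_
  obtain ⟨n, p, hp, rfl⟩ : ∃ n p, p < 2 ∧ k = 2 * n + p :=
    ⟨k / 2, k % 2, k.mod_lt two_pos, by omega⟩
  rw [thresholds_succ σ hp]
  exact response_mem σ hlegal (A := fun i => maxAbove (thresholds σ (2 * i + p)))
    (fun _ => maxAbove_mem hnp _) n

end Play

theorem stmt18 (u : Ultrafilter (Finset ℕ))
    (hnp : ∀ A : Set (Finset ℕ), A.Finite → A ∉ u) :
    ¬ ∃ σ : List (Set (Finset ℕ)) → Finset ℕ,
      (∀ (l : List (Set (Finset ℕ))) (A : Set (Finset ℕ)),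
        (∀ B ∈ l, B ∈ u) → A ∈ u → σ (l ++ [A]) ∈ A) ∧
      (∀ A : ℕ → Set (Finset ℕ), (∀ n, A n ∈ u) →
        FU (Set.range fun n => σ ((List.range (n + 1)).map A)) ∈ u) := by
  rintro ⟨σ, hlegal, hwin⟩
  let play (p : ℕ) : ℕ → Finset ℕ :=
    response σ fun i => maxAbove (thresholds σ (2 * i + p))
  have hplay (p : ℕ) : FU (range (play p)) ∈ u := hwin _ fun _ => maxAbove_mem hnp _
  have hinj := (thresholds_strictMono σ hnp hlegal).injective
  have hdisj : Disjoint (FU (range (play 0))) (FU (range (play 1))) := by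
    refine disjoint_FU_of_mx_ne ?_
    rintro _ ⟨n, rfl⟩ _ ⟨m, rfl⟩ h
    rw [← thresholds_succ σ (by norm_num), ← thresholds_succ σ (by norm_num)] at h
    have := hinj h
    omega
  exact u.empty_notMem (hdisj.inter_eq ▸ Filter.inter_mem (hplay 0) (hplay 1))
end
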